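/- arXiv:2510.23456 — 7 statements merged into one kernel-verified Lean document; each statement's English description precedes it below -/
import Mathlib

section
/- For every κ ≥ 0 and every h > 0 one has (21 − 25c_h⁴ + 6c_h⁸)(1+κ)² + (−12 + 6c_h⁴ + 3c_h⁸)(1+κ) + 9c_h⁴ > 0; that is, the numerator of the coefficient 𝖾₁₁(κ,h) is strictly positive. -/
/- Writing t = c_h⁴ and expanding in powers of κ, the numerator becomes
(3 - t)(7 - 6t) κ² + (30 - 44t + 15t²) κ + (9 - 10t + 9t²). For t ≤ 1 the first two
coefficients are positive (the roots of 15t² - 44t + 30 exceed 1) and the constant term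
is positive for every t (negative discriminant). Since tanh < 1, indeed c_h⁴ ≤ 1. -/

/-- `c_h := √(tanh h)`. -/
noncomputable def ch (h : ℝ) : ℝ := Real.sqrt (Real.tanh h)

theorem ch_le_one (h : ℝ) : ch h ≤ 1 :=
  Real.sqrt_le_one.mpr (Real.tanh_lt_one h).le

theorem ch_pow_four_le_one (h : ℝ) : ch h ^ 4 ≤ 1 :=
  pow_le_one₀ (Real.sqrt_nonneg _) (ch_le_one h)

theorem e11_numerator_poly_pos {t κ : ℝ} (ht : t ≤ 1) (hκ : 0 ≤ κ) :
    0 < (21 - 25 * t + 6 * t ^ 2) * (1 + κ) ^ 2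
        + (-12 + 6 * t + 3 * t ^ 2) * (1 + κ) + 9 * t := by
  have hquad : 0 < (3 - t) * (7 - 6 * t) := mul_pos (by linarith) (by linarith)
  have hlin : 0 < 30 - 44 * t + 15 * t ^ 2 := by nlinarith
  have hconst : 0 < 9 - 10 * t + 9 * t ^ 2 := by nlinarith [sq_nonneg (9 * t - 5)]
  calc (0 : ℝ) < (3 - t) * (7 - 6 * t) * κ ^ 2 + (30 - 44 * t + 15 * t ^ 2) * κ
          + (9 - 10 * t + 9 * t ^ 2) := by positivity
    _ = _ := by ring

theorem e11_numerator_pos_general (κ h : ℝ) (hκ : 0 ≤ κ) :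
    0 < (21 - 25 * ch h ^ 4 + 6 * ch h ^ 8) * (1 + κ) ^ 2
        + (-12 + 6 * ch h ^ 4 + 3 * ch h ^ 8) * (1 + κ) + 9 * ch h ^ 4 := by
  have h8 : ch h ^ 8 = (ch h ^ 4) ^ 2 := by ring
  rw [h8]
  exact e11_numerator_poly_pos (ch_pow_four_le_one h) hκ

theorem e11_numerator_pos (κ h : ℝ) (hκ : 0 ≤ κ) (hh : 0 < h) :
    0 < (21 - 25 * ch h ^ 4 + 6 * ch h ^ 8) * (1 + κ) ^ 2
        + (-12 + 6 * ch h ^ 4 + 3 * ch h ^ 8) * (1 + κ) + 9 * ch h ^ 4 :=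
  e11_numerator_pos_general κ h hκ
end

section
/- For every h > 0 one has h² · (1/tanh(h)² − 1/3) > 1. -/
open Real Set

lemma deriv_nonneg_aux {f f' : ℝ → ℝ} (hd : ∀ u, HasDerivAt f (f' u) u) (h0 : f 0 = 0)
    (hp : ∀ u ∈ Icc (0:ℝ) 3, 0 ≤ f' u) : ∀ u ∈ Icc (0:ℝ) 3, 0 ≤ f u := by
  intro u hu
  have hm : MonotoneOn f (Icc (0:ℝ) 3) := by
    apply monotoneOn_of_deriv_nonneg (convex_Icc 0 3)
    · exact fun x _ => (hd x).continuousAt.continuousWithinAt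
    · exact fun x _ => (hd x).differentiableAt.differentiableWithinAt
    · intro x hx
      rw [(hd x).deriv]
      exact hp x (interior_subset hx)
  have h03 : (0:ℝ) ∈ Icc (0:ℝ) 3 := by norm_num
  have := hm h03 hu hu.1
  linarith [h0 ▸ this]

lemma cosh_le_24 : ∀ u ∈ Icc (0:ℝ) 3, Real.cosh u ≤ 24 := by
  intro u hu
  have h1 : Real.exp u ≤ Real.exp 3 := Real.exp_le_exp.2 hu.2
  have h2 : Real.exp (-u) ≤ 1 := Real.exp_le_one_iff.2 (by linarith [hu.1])
  have h3 : Real.exp 3 < 2.7182818286 ^ 3 := by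
    calc Real.exp 3 = Real.exp 1 ^ 3 := by
          rw [← Real.exp_nat_mul]; norm_num
      _ < 2.7182818286 ^ 3 := by
          exact pow_lt_pow_left₀ Real.exp_one_lt_d9 (Real.exp_pos 1).le (by norm_num)
  rw [Real.cosh_eq]
  nlinarith

lemma cosh_poly_bound : ∀ u ∈ Icc (0:ℝ) 3,
    Real.cosh u ≤ 1 + u ^ 2 / 2 + u ^ 4 / 24 + u ^ 6 / 30 := by
  have d1 : ∀ u : ℝ, HasDerivAt (fun u => 24 * u - Real.sinh u) (24 - Real.cosh u) u := by
    intro u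
    exact (((hasDerivAt_id u).const_mul (24:ℝ)).sub (Real.hasDerivAt_sinh u)).congr_deriv (by simp)
  have h1 := deriv_nonneg_aux d1 (by simp) (fun u hu => by linarith [cosh_le_24 u hu])
  have d2 : ∀ u : ℝ, HasDerivAt (fun u => 12 * u ^ 2 + 1 - Real.cosh u)
      (24 * u - Real.sinh u) u := by
    intro u
    have := (((hasDerivAt_pow 2 u).const_mul (12:ℝ)).add_const 1).sub (Real.hasDerivAt_cosh u)
    exact this.congr_deriv (by push_cast; ring)
  have h2 := deriv_nonneg_aux d2 (by simp) h1
  have d3 : ∀ u : ℝ, HasDerivAt (fun u => 4 * u ^ 3 + u - Real.sinh u)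
      (12 * u ^ 2 + 1 - Real.cosh u) u := by
    intro u
    have := (((hasDerivAt_pow 3 u).const_mul (4:ℝ)).add (hasDerivAt_id u)).sub
      (Real.hasDerivAt_sinh u)
    exact this.congr_deriv (by push_cast; ring)
  have h3 := deriv_nonneg_aux d3 (by simp) h2
  have d4 : ∀ u : ℝ, HasDerivAt (fun u => u ^ 4 + u ^ 2 / 2 + 1 - Real.cosh u)
      (4 * u ^ 3 + u - Real.sinh u) u := by
    intro u
    have := (((hasDerivAt_pow 4 u).add ((hasDerivAt_pow 2 u).div_const 2)).add_const 1).sub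
      (Real.hasDerivAt_cosh u)
    exact this.congr_deriv (by push_cast; ring)
  have h4 := deriv_nonneg_aux d4 (by simp) h3
  have d5 : ∀ u : ℝ, HasDerivAt (fun u => u ^ 5 / 5 + u ^ 3 / 6 + u - Real.sinh u)
      (u ^ 4 + u ^ 2 / 2 + 1 - Real.cosh u) u := by
    intro u
    have := ((((hasDerivAt_pow 5 u).div_const 5).add ((hasDerivAt_pow 3 u).div_const 6)).add
      (hasDerivAt_id u)).sub (Real.hasDerivAt_sinh u)
    exact this.congr_deriv (by push_cast; ring)
  have h5 := deriv_nonneg_aux d5 (by simp) h4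
  have d6 : ∀ u : ℝ, HasDerivAt
      (fun u => u ^ 6 / 30 + u ^ 4 / 24 + u ^ 2 / 2 + 1 - Real.cosh u)
      (u ^ 5 / 5 + u ^ 3 / 6 + u - Real.sinh u) u := by
    intro u
    have := (((((hasDerivAt_pow 6 u).div_const 30).add ((hasDerivAt_pow 4 u).div_const 24)).add
      ((hasDerivAt_pow 2 u).div_const 2)).add_const 1).sub (Real.hasDerivAt_cosh u)
    exact this.congr_deriv (by push_cast; ring)
  have h6 := deriv_nonneg_aux d6 (by simp) h5
  intro u hu
  have := h6 u hu
  linarith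

theorem key_inequality (h : ℝ) (hh : 0 < h) :
    1 < h ^ 2 * (1 / Real.tanh h ^ 2 - 1 / 3) := by
  set s := Real.sinh h with hs
  set c := Real.cosh h with hc
  have hs0 : 0 < s := Real.sinh_pos_iff.2 hh
  have hc0 : 0 < c := Real.cosh_pos h
  have hcs : c ^ 2 - s ^ 2 = 1 := Real.cosh_sq_sub_sinh_sq h
  have ht : Real.tanh h = s / c := Real.tanh_eq_sinh_div_cosh h
  have key : 3 * s ^ 2 < h ^ 2 * (3 * c ^ 2 - s ^ 2) := by
    rcases le_or_gt (3:ℝ) (2 * h ^ 2) with hbig | hsmall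
    · nlinarith [sq_nonneg s, sq_nonneg h]
    · have hu : 2 * h ∈ Icc (0:ℝ) 3 := by
        constructor
        · linarith
        · nlinarith
      have hb := cosh_poly_bound (2 * h) hu
      have h2h : Real.cosh (2 * h) = c ^ 2 + s ^ 2 := Real.cosh_two_mul h
      rw [h2h] at hb
      nlinarith [sq_nonneg h, sq_nonneg s, sq_nonneg (h*s), sq_nonneg (h*h*s),
        sq_nonneg (15 - 19 * h ^ 2), mul_pos hh hh]
  have htt : 1 / Real.tanh h ^ 2 = c ^ 2 / s ^ 2 := by
    rw [ht]
    field_simp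
  rw [htt]
  rw [show c ^ 2 / s ^ 2 - 1 / 3 = (3 * c ^ 2 - s ^ 2) / (3 * s ^ 2) by
    field_simp]
  rw [mul_div_assoc', lt_div_iff₀ (by positivity)]
  linarith
end

section
/- If h > 0 and κ > h²/3 (the Bond number condition), then tanh(h)²·(1+κ) − 3κ < 0; i.e. c_h⁴(1+κ) − 3κ < 0, where c_h := √(tanh h). -/
open Real

/-- `sinh x ≤ x * cosh x` for `x ≥ 0`. -/
lemma aux_sinh_le_mul_cosh : ∀ x : ℝ, 0 ≤ x → Real.sinh x ≤ x * Real.cosh x := by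
  intro x hx
  have key : MonotoneOn (fun y : ℝ => y * Real.cosh y - Real.sinh y) (Set.Ici 0) := by
    apply monotoneOn_of_deriv_nonneg (convex_Ici 0)
    · fun_prop
    · intro y hy
      exact (((hasDerivAt_id y).mul (Real.hasDerivAt_cosh y)).sub
        (Real.hasDerivAt_sinh y)).differentiableAt.differentiableWithinAt
    · intro y hy
      rw [interior_Ici] at hy
      have hd : HasDerivAt (fun y : ℝ => y * Real.cosh y - Real.sinh y)
          (1 * Real.cosh y + y * Real.sinh y - Real.cosh y) y :=
        ((hasDerivAt_id y).mul (Real.hasDerivAt_cosh y)).sub (Real.hasDerivAt_sinh y)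
      rw [hd.deriv]
      have h1 : 0 ≤ Real.sinh y := Real.sinh_nonneg_iff.2 (le_of_lt hy)
      nlinarith [le_of_lt (show (0:ℝ) < y from hy)]
  have := key (Set.self_mem_Ici) (Set.mem_Ici.2 hx) hx
  simp only [Real.sinh_zero, Real.cosh_zero] at this
  linarith

/-- Key inequality: `sinh x ^ 2 * (3 + x ^ 2) ≤ 3 * x ^ 2 * cosh x ^ 2` for `x ≥ 0`. -/
lemma aux_key : ∀ x : ℝ, 0 ≤ x →
    Real.sinh x ^ 2 * (3 + x ^ 2) ≤ 3 * x ^ 2 * Real.cosh x ^ 2 := by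
  intro x hx
  have key : MonotoneOn
      (fun y : ℝ => 3 * y ^ 2 * Real.cosh y ^ 2 - Real.sinh y ^ 2 * (3 + y ^ 2))
      (Set.Ici 0) := by
    apply monotoneOn_of_deriv_nonneg (convex_Ici 0)
    · fun_prop
    · intro y hy
      apply DifferentiableAt.differentiableWithinAt
      fun_prop
    · intro y hy
      rw [interior_Ici] at hy
      have hy0 : (0:ℝ) ≤ y := le_of_lt hy
      have hd : HasDerivAt
          (fun y : ℝ => 3 * y ^ 2 * Real.cosh y ^ 2 - Real.sinh y ^ 2 * (3 + y ^ 2))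
          ((3 * (2 * y) * Real.cosh y ^ 2 +
              3 * y ^ 2 * (2 * Real.cosh y * Real.sinh y)) -
            (2 * Real.sinh y * Real.cosh y * (3 + y ^ 2) +
              Real.sinh y ^ 2 * (2 * y))) y := by
        have h1 : HasDerivAt (fun y : ℝ => 3 * y ^ 2) (3 * (2 * y)) y := by
          simpa using ((hasDerivAt_pow 2 y).const_mul (3:ℝ))
        have h2 : HasDerivAt (fun y : ℝ => Real.cosh y ^ 2)
            (2 * Real.cosh y * Real.sinh y) y := by
          have := (Real.hasDerivAt_cosh y).fun_pow 2
          simpa [mul_comm, mul_assoc, mul_left_comm] using this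
        have h3 : HasDerivAt (fun y : ℝ => Real.sinh y ^ 2)
            (2 * Real.sinh y * Real.cosh y) y := by
          have := (Real.hasDerivAt_sinh y).fun_pow 2
          simpa [mul_comm, mul_assoc, mul_left_comm] using this
        have h4 : HasDerivAt (fun y : ℝ => 3 + y ^ 2) (2 * y) y := by
          simpa using (hasDerivAt_pow 2 y).const_add (3:ℝ)
        exact (h1.mul h2).sub (h3.mul h4)
      rw [hd.deriv]
      set s := Real.sinh y
      set c := Real.cosh y
      have hs0 : 0 ≤ s := Real.sinh_nonneg_iff.2 hy0
      have hc1 : 1 ≤ c := Real.one_le_cosh y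
      have hsc : s ≤ y * c := aux_sinh_le_mul_cosh y hy0
      have hpyth : c ^ 2 = 1 + s ^ 2 := by
        have := Real.cosh_sq_sub_sinh_sq y
        nlinarith [this]
      -- goal: 0 ≤ 6 y c² + 6 y² c s - 2 s c (3 + y²) - 2 y s²
      -- = 6 y + 4 y s² + 2 s c (2 y² - 3)
      rcases le_or_gt (3 - 2 * y ^ 2) 0 with hcase | hcase
      · nlinarith [mul_nonneg hs0 (le_trans zero_le_one hc1),
          mul_nonneg (mul_nonneg hs0 hs0) hy0]
      · have h5 : s * c * (3 - 2 * y ^ 2) ≤ (y * c) * c * (3 - 2 * y ^ 2) := by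
          apply mul_le_mul_of_nonneg_right _ (le_of_lt hcase)
          exact mul_le_mul_of_nonneg_right hsc (le_trans zero_le_one hc1)
        nlinarith [mul_le_mul hsc hsc hs0 (mul_nonneg hy0 (le_trans zero_le_one hc1)),
          mul_nonneg hy0 (sq_nonneg s)]
  have := key (Set.self_mem_Ici) (Set.mem_Ici.2 hx) hx
  simp only [Real.sinh_zero, Real.cosh_zero] at this
  nlinarith [this]

lemma aux_tanh_key (h : ℝ) (hh : 0 < h) :
    Real.tanh h ^ 2 * (3 + h ^ 2) ≤ 3 * h ^ 2 := by
  have hc : 0 < Real.cosh h := Real.cosh_pos h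
  have hkey := aux_key h (le_of_lt hh)
  have ht : Real.tanh h = Real.sinh h / Real.cosh h := Real.tanh_eq_sinh_div_cosh h
  rw [ht, div_pow]
  rw [div_mul_eq_mul_div, div_le_iff₀ (by positivity)]
  nlinarith [hkey]

theorem denominator_neg_of_bond (κ h : ℝ) (hh : 0 < h) (hbond : h ^ 2 / 3 < κ) :
    Real.tanh h ^ 2 * (1 + κ) - 3 * κ < 0 := by
  have hkey := aux_tanh_key h hh
  have ht3 : Real.tanh h ^ 2 < 3 := by nlinarith [sq_nonneg h]
  nlinarith [mul_pos (sub_pos.2 hbond) (sub_pos.2 ht3)]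
end

section
/- If h > 0 and κ > h²/3 (the Bond number condition), then D(h,κ) := h − (1/4)·𝖾₁₂(κ,h)² < 0. -/
/-- The coefficient `𝖾₁₂(κ,h)`. -/
noncomputable def e12 (κ h : ℝ) : ℝ :=
  2 * Real.sqrt (1 + κ) * ch h *
    ((ch h ^ 2 + (1 - ch h ^ 4) * h) / (2 * ch h ^ 2) + κ / (1 + κ))

/-- `D(h,κ) := h − (1/4)·𝖾₁₂(κ,h)²`. -/
noncomputable def Dhk (h κ : ℝ) : ℝ := h - (1 / 4) * e12 κ h ^ 2

private lemma monoAux {f f' : ℝ → ℝ} (hd : ∀ y : ℝ, HasDerivAt f (f' y) y)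
    (hge : ∀ y : ℝ, 0 < y → 0 ≤ f' y) {x : ℝ} (hx : 0 ≤ x) : f 0 ≤ f x := by
  have hmono : MonotoneOn f (Set.Ici (0 : ℝ)) := by
    apply monotoneOn_of_deriv_nonneg (convex_Ici 0)
    · exact fun y _ => (hd y).continuousAt.continuousWithinAt
    · intro y hy
      exact (hd y).differentiableAt.differentiableWithinAt
    · intro y hy
      rw [interior_Ici, Set.mem_Ioi] at hy
      rw [(hd y).deriv]
      exact hge y hy
  exact hmono (Set.self_mem_Ici) hx hx

private lemma aux2 {x : ℝ} (hx : 0 ≤ x) :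
    0 ≤ x * Real.sinh x + 1 - Real.cosh x := by
  have hd : ∀ y : ℝ, HasDerivAt (fun z : ℝ => z * Real.sinh z + 1 - Real.cosh z)
      (y * Real.cosh y) y := by
    intro y
    have h1 := (((hasDerivAt_id y).mul (Real.hasDerivAt_sinh y)).add_const 1).sub
      (Real.hasDerivAt_cosh y)
    have h2 : y * Real.cosh y = 1 * Real.sinh y + y * Real.cosh y - Real.sinh y := by ring
    rw [h2]
    exact h1
  have hge : ∀ y : ℝ, 0 < y → 0 ≤ y * Real.cosh y := by
    intro y hy
    positivity
  have h := monoAux hd hge hx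
  simpa using h

private lemma aux1 {x : ℝ} (hx : 0 ≤ x) :
    0 ≤ x + x * Real.cosh x - 2 * Real.sinh x := by
  have hd : ∀ y : ℝ, HasDerivAt (fun z : ℝ => z + z * Real.cosh z - 2 * Real.sinh z)
      (y * Real.sinh y + 1 - Real.cosh y) y := by
    intro y
    have h1 := ((hasDerivAt_id y).add ((hasDerivAt_id y).mul (Real.hasDerivAt_cosh y))).sub
      ((Real.hasDerivAt_sinh y).const_mul 2)
    have h2 : y * Real.sinh y + 1 - Real.cosh y
        = 1 + (1 * Real.cosh y + y * Real.sinh y) - 2 * Real.cosh y := by ring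
    rw [h2]
    exact h1
  have hge : ∀ y : ℝ, 0 < y → 0 ≤ y * Real.sinh y + 1 - Real.cosh y := fun y hy => aux2 hy.le
  have h := monoAux hd hge hx
  simpa using h

private lemma aux0 {x : ℝ} (hx : 0 ≤ x) :
    0 ≤ x ^ 2 + 2 * x * Real.sinh x - 6 * Real.cosh x + 6 := by
  have hd : ∀ y : ℝ, HasDerivAt
      (fun z : ℝ => z ^ 2 + 2 * z * Real.sinh z - 6 * Real.cosh z + 6)
      (2 * (y + y * Real.cosh y - 2 * Real.sinh y)) y := by
    intro y
    have h1 := ((((hasDerivAt_pow 2 y).add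
      (((hasDerivAt_id y).const_mul 2).mul (Real.hasDerivAt_sinh y))).sub
      ((Real.hasDerivAt_cosh y).const_mul 6)).add_const 6)
    have h2 : 2 * (y + y * Real.cosh y - 2 * Real.sinh y)
        = (2 : ℕ) * y ^ (2 - 1) + (2 * 1 * Real.sinh y + 2 * y * Real.cosh y)
          - 6 * Real.sinh y := by
      push_cast
      ring
    rw [h2]
    exact h1
  have hge : ∀ y : ℝ, 0 < y → 0 ≤ 2 * (y + y * Real.cosh y - 2 * Real.sinh y) := by
    intro y hy
    nlinarith [aux1 hy.le]
  have h := monoAux hd hge hx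
  simpa using h

/-- Key inequality: `h² + 2·h·sinh h·cosh h − 3·sinh² h ≥ 0`. -/
private lemma keySC {h : ℝ} (hh : 0 ≤ h) :
    0 ≤ h ^ 2 + 2 * h * Real.sinh h * Real.cosh h - 3 * Real.sinh h ^ 2 := by
  have h0 := aux0 (x := 2 * h) (by linarith)
  rw [Real.sinh_two_mul, Real.cosh_two_mul] at h0
  have h1 := Real.cosh_sq_sub_sinh_sq h
  nlinarith

/-- Key inequality in terms of `t = tanh h`. -/
private lemma keyT {h : ℝ} (hh : 0 < h) :
    0 ≤ h ^ 2 * (1 - Real.tanh h ^ 2) + 2 * Real.tanh h * h - 3 * Real.tanh h ^ 2 := by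
  have hc : 0 < Real.cosh h := Real.cosh_pos h
  have h1 := Real.cosh_sq_sub_sinh_sq h
  have h2 := keySC hh.le
  rw [Real.tanh_eq_sinh_div_cosh]
  have key : h ^ 2 * (1 - (Real.sinh h / Real.cosh h) ^ 2) +
      2 * (Real.sinh h / Real.cosh h) * h - 3 * (Real.sinh h / Real.cosh h) ^ 2
      = (h ^ 2 + 2 * h * Real.sinh h * Real.cosh h - 3 * Real.sinh h ^ 2
          + h ^ 2 * (Real.cosh h ^ 2 - Real.sinh h ^ 2 - 1))
        / Real.cosh h ^ 2 := by
    field_simp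
    ring
  rw [key]
  apply div_nonneg _ (by positivity)
  nlinarith [h2, h1]

private lemma e12_sq {κ h : ℝ} (hκ : 0 < 1 + κ) (ht : 0 < Real.tanh h) :
    e12 κ h ^ 2
      = ((1 + κ) * (Real.tanh h + (1 - Real.tanh h ^ 2) * h) + 2 * Real.tanh h * κ) ^ 2
        / (Real.tanh h * (1 + κ)) := by
  have h2 : ch h ^ 2 = Real.tanh h := Real.sq_sqrt ht.le
  have h4 : ch h ^ 4 = Real.tanh h ^ 2 := by
    rw [show (4 : ℕ) = 2 * 2 from rfl, pow_mul, h2]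
  have hs : Real.sqrt (1 + κ) ^ 2 = 1 + κ := Real.sq_sqrt hκ.le
  have ht' : Real.tanh h ≠ 0 := ne_of_gt ht
  have hκ' : (1 + κ) ≠ 0 := ne_of_gt hκ
  rw [e12, mul_pow, mul_pow, mul_pow, hs, h2, h4]
  field_simp

theorem Dhk_neg_of_bond (κ h : ℝ) (hh : 0 < h) (hbond : h ^ 2 / 3 < κ) :
    Dhk h κ < 0 := by
  have hκ : 0 < κ := lt_trans (by positivity) hbond
  have hu : (0 : ℝ) < 1 + κ := by linarith
  have hc : 0 < Real.cosh h := Real.cosh_pos h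
  have hs : 0 < Real.sinh h := Real.sinh_pos_iff.2 hh
  have ht0 : 0 < Real.tanh h := by
    rw [Real.tanh_eq_sinh_div_cosh]; positivity
  have ht1 : Real.tanh h < 1 := by
    rw [Real.tanh_eq_sinh_div_cosh, div_lt_one hc]
    exact Real.sinh_lt_cosh h
  have hK := keyT hh
  rw [Dhk, e12_sq hu ht0]
  set t := Real.tanh h with htdef
  -- auxiliary inequalities
  have hM : 0 < h * (1 - t ^ 2) + 2 * t := by nlinarith
  have hstep : h * t ^ 2 < κ * (h * (1 - t ^ 2) + 2 * t) := by nlinarith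
  have hlin : (1 + κ) * t + h < (1 + κ) * (t + (1 - t ^ 2) * h) + 2 * t * κ := by nlinarith
  have hpos : 0 < (1 + κ) * t + h := by positivity
  have hmain : 4 * t * (1 + κ) * h
      < ((1 + κ) * (t + (1 - t ^ 2) * h) + 2 * t * κ) ^ 2 := by
    nlinarith [sq_nonneg ((1 + κ) * t - h), hlin, hpos]
  rw [sub_neg]
  have heq : (1 : ℝ) / 4 * (((1 + κ) * (t + (1 - t ^ 2) * h) + 2 * t * κ) ^ 2 / (t * (1 + κ)))
      = ((1 + κ) * (t + (1 - t ^ 2) * h) + 2 * t * κ) ^ 2 / (4 * (t * (1 + κ))) := by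
    have h1 : t ≠ 0 := ne_of_gt ht0
    have h2 : (1 + κ) ≠ 0 := ne_of_gt hu
    field_simp
  rw [heq, lt_div_iff₀ (by positivity)]
  nlinarith [hmain]
end

section
/- For every h > 0 one has the identity D(h, h²/3) = − q(h) / ( 24·(cosh(2h)+1)²·tanh(h)·(h²+3) ), where q(h) := 9cosh(4h) − 36h·sinh(4h) + 18h²·cosh(4h) + 9h⁴·cosh(4h) + 72h³·sinh(2h) − 12h³·sinh(4h) + 24h⁵·sinh(2h) + 54h² + 39h⁴ + 8h⁶ − 9. -/
set_option maxHeartbeats 2000000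


/-- The auxiliary function `q`. -/
noncomputable def q (h : ℝ) : ℝ :=
  9 * Real.cosh (4 * h) - 36 * h * Real.sinh (4 * h) + 18 * h ^ 2 * Real.cosh (4 * h)
    + 9 * h ^ 4 * Real.cosh (4 * h) + 72 * h ^ 3 * Real.sinh (2 * h)
    - 12 * h ^ 3 * Real.sinh (4 * h) + 24 * h ^ 5 * Real.sinh (2 * h)
    + 54 * h ^ 2 + 39 * h ^ 4 + 8 * h ^ 6 - 9

theorem Dhk_at_bond_borderline (h : ℝ) (hh : 0 < h) :
    Dhk h (h ^ 2 / 3)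
      = - q h / (24 * (Real.cosh (2 * h) + 1) ^ 2 * Real.tanh h * (h ^ 2 + 3)) := by
  have ht : 0 < Real.tanh h := by rw [Real.tanh_eq_sinh_div_cosh]; positivity
  have h2 : Real.sqrt (Real.tanh h) ^ 2 = Real.tanh h := Real.sq_sqrt ht.le
  have h4 : Real.sqrt (Real.tanh h) ^ 4 = Real.tanh h ^ 2 := by
    rw [show (4:ℕ) = 2*2 from rfl, pow_mul, h2]
  have h1 : Real.sqrt (1 + h ^ 2 / 3) ^ 2 = 1 + h ^ 2 / 3 := Real.sq_sqrt (by positivity)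
  have key : e12 (h ^ 2 / 3) h ^ 2 = 4 * (1 + h ^ 2 / 3) * Real.tanh h *
      ((Real.tanh h + (1 - Real.tanh h ^ 2) * h) / (2 * Real.tanh h)
        + (h ^ 2 / 3) / (1 + h ^ 2 / 3)) ^ 2 := by
    simp only [e12, ch, h2, h4]
    rw [mul_pow, mul_pow, mul_pow, h2, h1]
    ring
  rw [Dhk, key]
  have he : Real.exp h ≠ 0 := (Real.exp_pos h).ne'
  have he1 : 1 < Real.exp h := by
    have := Real.add_one_lt_exp hh.ne'
    linarith
  have hne : Real.exp h ^ 2 - 1 ≠ 0 := by nlinarith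
  have e2 : Real.exp (2 * h) = Real.exp h ^ 2 := by
    rw [show (2:ℝ)*h = (2:ℕ)*h by norm_num, Real.exp_nat_mul]
  have e4 : Real.exp (4 * h) = Real.exp h ^ 4 := by
    rw [show (4:ℝ)*h = (4:ℕ)*h by norm_num, Real.exp_nat_mul]
  have hp1 : (Real.exp h ^ 2 + 1 : ℝ) ≠ 0 := by positivity
  have htanh : Real.tanh h = (Real.exp h ^ 2 - 1) / (Real.exp h ^ 2 + 1) := by
    rw [Real.tanh_eq_sinh_div_cosh, Real.sinh_eq, Real.cosh_eq, Real.exp_neg]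
    rw [div_eq_div_iff (by positivity) hp1]
    field_simp
  have hcosh2 : Real.cosh (2 * h) = (Real.exp h ^ 4 + 1) / (2 * Real.exp h ^ 2) := by
    rw [Real.cosh_eq, Real.exp_neg, e2]
    field_simp
  have hsinh2 : Real.sinh (2 * h) = (Real.exp h ^ 4 - 1) / (2 * Real.exp h ^ 2) := by
    rw [Real.sinh_eq, Real.exp_neg, e2]
    field_simp
  have hcosh4 : Real.cosh (4 * h) = (Real.exp h ^ 8 + 1) / (2 * Real.exp h ^ 4) := by
    rw [Real.cosh_eq, Real.exp_neg, e4]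
    field_simp
  have hsinh4 : Real.sinh (4 * h) = (Real.exp h ^ 8 - 1) / (2 * Real.exp h ^ 4) := by
    rw [Real.sinh_eq, Real.exp_neg, e4]
    field_simp
  have h3 : (h:ℝ) ^ 2 + 3 ≠ 0 := by positivity
  have h3' : (1 : ℝ) + h ^ 2 / 3 ≠ 0 := by positivity
  rw [q, htanh, hcosh2, hsinh2, hcosh4, hsinh4]
  field_simp
  ring
end

section
/- Let h > 0 and κ > h²/3 (the Bond number condition). Then the function x ↦ (1 + κx²)·tanh(hx)/x is strictly monotone increasing on (0,∞); equivalently, the squared phase speed of the gravity–capillary dispersion relation is strictly increasing in the wavenumber. -/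
open Real Set

/-- If `g 0 = 0` and `g' > 0` on `(0,∞)`, then `g > 0` on `(0,∞)`. -/
lemma aux_pos_of_deriv_pos {g g' : ℝ → ℝ} (hd : ∀ u, HasDerivAt g (g' u) u)
    (h0 : g 0 = 0) (hp : ∀ u, 0 < u → 0 < g' u) : ∀ u, 0 < u → 0 < g u := by
  intro u hu
  have hmono : StrictMonoOn g (Set.Ici 0) := by
    apply strictMonoOn_of_deriv_pos (convex_Ici 0)
    · exact fun x _ => (hd x).continuousAt.continuousWithinAt
    · intro x hx
      rw [interior_Ici] at hx
      rw [(hd x).deriv]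
      exact hp x hx
  have := hmono Set.self_mem_Ici (le_of_lt hu) hu
  simpa [h0] using this

lemma aux_phi3 : ∀ u : ℝ, 0 < u → 0 < 6 + 6*u*Real.sinh u - (6 - u^2)*Real.cosh u := by
  apply aux_pos_of_deriv_pos (g' := fun u => 8*u*Real.cosh u + u^2*Real.sinh u)
  · intro u
    have h := ((hasDerivAt_const u 6).add ((((hasDerivAt_id u).const_mul 6)).mul
        (Real.hasDerivAt_sinh u))).sub
        (((hasDerivAt_pow 2 u).const_sub 6).mul (Real.hasDerivAt_cosh u))
    refine h.congr_deriv ?_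
    push_cast [id_eq]
    ring
  · simp
  · intro u hu
    have hs := Real.sinh_pos_iff.mpr hu
    have hc := Real.cosh_pos u
    positivity

lemma aux_phi2 : ∀ u : ℝ, 0 < u → 0 < 6*u + 4*u*Real.cosh u - (10 - u^2)*Real.sinh u := by
  apply aux_pos_of_deriv_pos (g' := fun u => 6 + 6*u*Real.sinh u - (6 - u^2)*Real.cosh u)
  · intro u
    have h := (((hasDerivAt_id u).const_mul 6).add (((hasDerivAt_id u).const_mul 4).mul
        (Real.hasDerivAt_cosh u))).sub
        (((hasDerivAt_pow 2 u).const_sub 10).mul (Real.hasDerivAt_sinh u))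
    refine h.congr_deriv ?_
    push_cast [id_eq]
    ring
  · simp
  · exact aux_phi3

lemma aux_phi1 : ∀ u : ℝ, 0 < u →
    0 < 12 + 3*u^2 + 2*u*Real.sinh u - (12 - u^2)*Real.cosh u := by
  apply aux_pos_of_deriv_pos (g' := fun u => 6*u + 4*u*Real.cosh u - (10 - u^2)*Real.sinh u)
  · intro u
    have h := (((hasDerivAt_const u 12).add ((hasDerivAt_pow 2 u).const_mul 3)).add
        (((hasDerivAt_id u).const_mul 2).mul (Real.hasDerivAt_sinh u))).sub
        (((hasDerivAt_pow 2 u).const_sub 12).mul (Real.hasDerivAt_cosh u))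
    refine h.congr_deriv ?_
    push_cast [id_eq]
    ring
  · simp
  · exact aux_phi2

lemma aux_phi0 : ∀ u : ℝ, 0 < u → 0 < 12*u + u^3 - (12 - u^2)*Real.sinh u := by
  apply aux_pos_of_deriv_pos
      (g' := fun u => 12 + 3*u^2 + 2*u*Real.sinh u - (12 - u^2)*Real.cosh u)
  · intro u
    have h := (((hasDerivAt_id u).const_mul 12).add (hasDerivAt_pow 3 u)).sub
        (((hasDerivAt_pow 2 u).const_sub 12).mul (Real.hasDerivAt_sinh u))
    refine h.congr_deriv ?_
    push_cast [id_eq]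
    ring
  · simp
  · exact aux_phi1

/-- Key inequality: `(3 - t²)·sinh t·cosh t < 3t + t³` for `t > 0`. -/
lemma aux_key_s14 (t : ℝ) (ht : 0 < t) :
    (3 - t^2) * (Real.sinh t * Real.cosh t) < 3*t + t^3 := by
  have h := aux_phi0 (2*t) (by linarith)
  have h2 : Real.sinh (2*t) = 2 * Real.sinh t * Real.cosh t := by
    rw [two_mul, Real.sinh_add]; ring
  rw [h2] at h
  nlinarith [h]

theorem phase_speed_strictMono (κ h : ℝ) (hh : 0 < h) (hbond : h ^ 2 / 3 < κ) :
    StrictMonoOn (fun x => (1 + κ * x ^ 2) * Real.tanh (h * x) / x) (Set.Ioi (0 : ℝ)) := by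
  have hfun : (fun x => (1 + κ * x ^ 2) * Real.tanh (h * x) / x)
      = (fun x => ((1 + κ * x ^ 2) * Real.sinh (h * x)) / (x * Real.cosh (h * x))) := by
    funext x
    rw [Real.tanh_eq_sinh_div_cosh]
    ring
  rw [hfun]
  -- derivative setup
  have hlin : ∀ x : ℝ, HasDerivAt (fun x : ℝ => h * x) h x := by
    intro x
    simpa using (hasDerivAt_id x).const_mul h
  have hderiv : ∀ x : ℝ, 0 < x →
      HasDerivAt (fun x => ((1 + κ * x ^ 2) * Real.sinh (h * x)) / (x * Real.cosh (h * x)))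
        ((((0 + κ * (2*x^1)) * Real.sinh (h*x) + (1 + κ*x^2) * (Real.cosh (h*x) * h)) *
            (x * Real.cosh (h*x)) -
          ((1 + κ*x^2) * Real.sinh (h*x)) * (1 * Real.cosh (h*x) + x * (Real.sinh (h*x) * h))) /
          (x * Real.cosh (h*x))^2) x := by
    intro x hx
    have hS : HasDerivAt (fun x => Real.sinh (h*x)) (Real.cosh (h*x) * h) x :=
      (Real.hasDerivAt_sinh (h*x)).comp x (hlin x)
    have hC : HasDerivAt (fun x => Real.cosh (h*x)) (Real.sinh (h*x) * h) x :=
      (Real.hasDerivAt_cosh (h*x)).comp x (hlin x)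
    have hnum : HasDerivAt (fun x => (1 + κ * x ^ 2) * Real.sinh (h * x))
        ((0 + κ * (2*x^1)) * Real.sinh (h*x) + (1 + κ*x^2) * (Real.cosh (h*x) * h)) x :=
      ((hasDerivAt_const x 1).add ((hasDerivAt_pow 2 x).const_mul κ)).mul hS
    have hden : HasDerivAt (fun x => x * Real.cosh (h * x))
        (1 * Real.cosh (h*x) + x * (Real.sinh (h*x) * h)) x := (hasDerivAt_id x).mul hC
    have hdne : x * Real.cosh (h*x) ≠ 0 :=
      ne_of_gt (mul_pos hx (Real.cosh_pos _))
    exact hnum.div hden hdne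
  apply strictMonoOn_of_deriv_pos (convex_Ioi 0)
  · intro x hx
    exact (hderiv x hx).continuousAt.continuousWithinAt
  · intro x hx
    rw [interior_Ioi] at hx
    have hx' : 0 < x := hx
    rw [(hderiv x hx').deriv]
    set t := h * x with htdef
    have ht : 0 < t := mul_pos hh hx
    set S := Real.sinh t
    set C := Real.cosh t
    have hC1 : 1 ≤ C := Real.one_le_cosh t
    have hCpos : 0 < C := lt_of_lt_of_le one_pos hC1
    have hSpos : 0 < S := Real.sinh_pos_iff.mpr ht
    have hpyth : C^2 - S^2 = 1 := Real.cosh_sq_sub_sinh_sq t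
    have hkey : (3 - t^2) * (S*C) < 3*t + t^3 := aux_key_s14 t ht
    have hk : t^2/3 < κ * x^2 := by
      have : (κ - h^2/3) * x^2 > 0 := mul_pos (by linarith) (pow_pos hx' 2)
      have ht2 : t^2 = h^2 * x^2 := by rw [htdef]; ring
      nlinarith
    apply div_pos
    · -- numerator positivity
      have hA : 0 < S * C + t := add_pos (mul_pos hSpos hCpos) ht
      have hnum_eq : ((0 + κ * (2*x^1)) * S + (1 + κ*x^2) * (C * h)) *
            (x * C) - ((1 + κ*x^2) * S) * (1 * C + x * (S * h))
          = κ*x^2*(S*C + t) + (t - S*C) := by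
        rw [htdef]
        linear_combination ((1+κ*x^2)*(h*x)) * hpyth
      rw [hnum_eq]
      nlinarith [mul_pos (sub_pos.mpr hk) hA, hkey]
    · have : (0:ℝ) < x * C := mul_pos hx' hCpos
      positivity
end

section
/- Let κ ≥ 0 and h > 0 with c_h⁴(1+κ) − 3κ ≠ 0, and set c_{h,κ} := (1+κ)^{1/2}·c_h, η₂⁽²⁾ := −(c_h⁴ − 3)(1+κ) / (4c_h²(c_h⁴(1+κ) − 3κ)) and ψ₂⁽²⁾ := (1+κ)^{1/2}·(9κ + 3 − 6c_h⁴κ + (1+κ)c_h⁸) / (8c_h³(c_h⁴(1+κ) − 3κ)). Then these values solve the 2×2 linear system determining the second-order Stokes-wave coefficients: (1 + 4κ)·η₂⁽²⁾ − 2c_{h,κ}·ψ₂⁽²⁾ = −((1+κ)/4)·(c_h² + c_h⁻²) and −2c_{h,κ}·η₂⁽²⁾ + 2·tanh(2h)·ψ₂⁽²⁾ = −(1 − c_h⁴)(1+κ)^{1/2} / (c_h(1 + c_h⁴)). -/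
theorem second_order_stokes_coefficients (κ h : ℝ) (hκ : 0 ≤ κ) (hh : 0 < h)
    (hden : ch h ^ 4 * (1 + κ) - 3 * κ ≠ 0) :
    let chk : ℝ := Real.sqrt (1 + κ) * ch h
    let η₂ : ℝ := -((ch h ^ 4 - 3) * (1 + κ)) / (4 * ch h ^ 2 * (ch h ^ 4 * (1 + κ) - 3 * κ))
    let ψ₂ : ℝ := Real.sqrt (1 + κ) * (9 * κ + 3 - 6 * ch h ^ 4 * κ + (1 + κ) * ch h ^ 8)
                    / (8 * ch h ^ 3 * (ch h ^ 4 * (1 + κ) - 3 * κ))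
    ((1 + 4 * κ) * η₂ - 2 * chk * ψ₂ = -((1 + κ) / 4) * (ch h ^ 2 + (ch h ^ 2)⁻¹)) ∧
      (-2 * chk * η₂ + 2 * Real.tanh (2 * h) * ψ₂
        = -(1 - ch h ^ 4) * Real.sqrt (1 + κ) / (ch h * (1 + ch h ^ 4))) := by
  intro chk η₂ ψ₂
  have ht : 0 < Real.tanh h := by
    rw [Real.tanh_eq_sinh_div_cosh]
    exact div_pos (Real.sinh_pos_iff.2 hh) (Real.cosh_pos h)
  have hc : 0 < ch h := Real.sqrt_pos.2 ht
  have hc2 : ch h ^ 2 = Real.tanh h := Real.sq_sqrt ht.le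
  have hk2 : Real.sqrt (1 + κ) ^ 2 = 1 + κ := Real.sq_sqrt (by linarith)
  have hch : 0 < Real.cosh h := Real.cosh_pos h
  have htanh2 : Real.tanh (2 * h) = 2 * ch h ^ 2 / (1 + ch h ^ 4) := by
    have h4 : ch h ^ 4 = Real.tanh h ^ 2 := by
      rw [show (4 : ℕ) = 2 * 2 from rfl, pow_mul, hc2]
    rw [hc2, h4, Real.tanh_eq_sinh_div_cosh, Real.tanh_eq_sinh_div_cosh,
      Real.sinh_two_mul, Real.cosh_two_mul, Real.cosh_sq]
    field_simp
    linear_combination Real.cosh_sq h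
  have hpos4 : (0:ℝ) < 1 + ch h ^ 4 := by positivity
  constructor
  · show (1 + 4 * κ) * η₂ - 2 * chk * ψ₂ = _
    simp only [chk, η₂, ψ₂]
    set s := Real.sqrt (1 + κ) with hs
    have hκe : κ = s ^ 2 - 1 := by rw [hk2]; ring
    field_simp
    rw [div_eq_iff (by rw [mul_comm κ]; exact hden)]
    rw [hκe]
    ring
  · show -2 * chk * η₂ + 2 * Real.tanh (2 * h) * ψ₂ = _
    simp only [chk, η₂, ψ₂, htanh2]
    set s := Real.sqrt (1 + κ) with hs
    have hκe : κ = s ^ 2 - 1 := by rw [hk2]; ring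
    field_simp
    rw [hκe]
    ring
end
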